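/- Let G be obtained from K_{s,t} (2 ≤ s ≤ t) by attaching a ≥ 1 pendent vertices to a vertex x_p in the part of size s and b ≥ 1 pendent vertices to a vertex y_q in the part of size t, and let G' be obtained by moving the b pendent edges from y_q to x_p. Then ξ^{ce}(G') − ξ^{ce}(G) = s(t−1)/6 > 0. -/

import Mathlib

open Finset
open scoped Classical

/-- Wiener index: sum of distances over unordered pairs of vertices. -/
noncomputable def wiener {V : Type*} [Fintype V] (G : SimpleGraph V) : ℚ :=
  (1/2) * ∑ u : V, ∑ v : V, (G.dist u v : ℚ)

/-- Harary index: sum of reciprocal distances over unordered pairs of distinct vertices. -/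
noncomputable def harary {V : Type*} [Fintype V] (G : SimpleGraph V) : ℚ :=
  (1/2) * ∑ p ∈ Finset.univ.offDiag, (1 : ℚ) / (G.dist p.1 p.2 : ℚ)

/-- Hyper-Wiener index: (1/2) Σ_{unordered pairs} (d + d²). -/
noncomputable def hyperWiener {V : Type*} [Fintype V] (G : SimpleGraph V) : ℚ :=
  (1/4) * ∑ u : V, ∑ v : V, ((G.dist u v : ℚ) + (G.dist u v : ℚ)^2)

/-- Eccentricity of a vertex: maximum distance to any other vertex. -/
noncomputable def ecc {V : Type*} [Fintype V] (G : SimpleGraph V) (u : V) : ℕ :=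
  Finset.univ.sup (fun v => G.dist u v)

/-- Connective eccentricity index: Σ_u deg(u)/ε(u). -/
noncomputable def cei {V : Type*} [Fintype V] (G : SimpleGraph V) : ℚ :=
  ∑ u : V, (G.degree u : ℚ) / (ecc G u : ℚ)

/-- Eccentricity distance sum: Σ_u ε(u)·D(u). -/
noncomputable def eds {V : Type*} [Fintype V] (G : SimpleGraph V) : ℚ :=
  ∑ u : V, (ecc G u : ℚ) * ∑ v : V, (G.dist u v : ℚ)

/-- The graph obtained from the complete bipartite graph `K_{s,t}` (parts `Fin s` and `Fin t`)
by attaching `a` pendant vertices to the vertex `xp` of the part of size `s` and `b` pendant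
vertices to the vertex `w` (which is `y_q` in the part of size `t` for the graph `G`, and
`x_p` itself for the graph `G'`). -/
def KstPend2 (s t a b : ℕ) (xp : Fin s) (w : Fin s ⊕ Fin t) :
    SimpleGraph ((Fin s ⊕ Fin t) ⊕ (Fin a ⊕ Fin b)) :=
  SimpleGraph.fromRel (fun x y =>
    (∃ i j, x = Sum.inl (Sum.inl i) ∧ y = Sum.inl (Sum.inr j)) ∨
    (∃ p, x = Sum.inr (Sum.inl p) ∧ y = Sum.inl (Sum.inl xp)) ∨
    (∃ q, x = Sum.inr (Sum.inr q) ∧ y = Sum.inl w))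

/-!
Every vertex of these graphs has eccentricity 2 or 3. A vertex of `K_{s,t}` has eccentricity 2
exactly when it is within distance 2 of every pendant vertex, and a pendant vertex has eccentricity
one more than its neighbour. So in `G'` the central vertices are `x_p` and all the `y_j`, in `G`
only `x_p` and `y_q`. The `b` moved edges contribute `b/2` in both graphs, so the difference comes
from the `t - 1` vertices `y_j ≠ y_q`, whose eccentricity drops from 3 to 2: each gains
`s/2 - s/3 = s/6`.
-/

namespace SimpleGraph

variable {V : Type*} {G : SimpleGraph V} {u v x y : V}

lemma dist_le_one_of_adj (h : G.Adj u v) : G.dist u v ≤ 1 := (dist_eq_one_iff_adj.mpr h).le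

lemma dist_le_two_of_adj_of_adj (hux : G.Adj u x) (hxv : G.Adj x v) : G.dist u v ≤ 2 :=
  dist_le (.cons hux (.cons hxv .nil))

lemma dist_le_three_of_adj_of_adj_of_adj (hux : G.Adj u x) (hxy : G.Adj x y)
    (hyv : G.Adj y v) : G.dist u v ≤ 3 :=
  dist_le (.cons hux (.cons hxy (.cons hyv .nil)))

lemma Reachable.two_lt_dist (hr : G.Reachable u v) (hne : u ≠ v) (hnadj : ¬ G.Adj u v)
    (hcommon : ∀ x, G.Adj u x → ¬ G.Adj x v) : 2 < G.dist u v := by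
  have hcn : G.commonNeighbors u v = ∅ :=
    Set.eq_empty_iff_forall_notMem.mpr fun x hx =>
      hcommon x (G.mem_commonNeighbors.mp hx).1 (G.mem_commonNeighbors.mp hx).2.symm
  have h := two_lt_edist_iff.mpr ⟨hne, hnadj, hcn⟩
  rw [← hr.coe_dist_eq_edist] at h
  exact_mod_cast h

lemma degree_eq_sum_ite [Fintype V] [DecidableRel G.Adj] :
    G.degree u = ∑ v, if G.Adj u v then 1 else 0 := by
  rw [degree, neighborFinset_eq_filter, Finset.card_filter]

end SimpleGraph

open SimpleGraph

section Eccentricity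

variable {V : Type*} [Fintype V] {G : SimpleGraph V} {u z : V}

lemma dist_le_ecc (G : SimpleGraph V) (u v : V) : G.dist u v ≤ ecc G u :=
  Finset.le_sup (f := fun v => G.dist u v) (mem_univ v)

lemma ecc_eq_of_forall_dist_le {n : ℕ} (hle : ∀ v, G.dist u v ≤ n) (v : V)
    (hv : n ≤ G.dist u v) : ecc G u = n :=
  le_antisymm (Finset.sup_le fun v _ => hle v) (hv.trans (dist_le_ecc G u v))

lemma ecc_of_forall_adj_iff (hu : ∀ x, G.Adj u x ↔ x = z) (hz : 2 ≤ ecc G z) :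
    ecc G u = ecc G z + 1 := by
  -- `hz` keeps `u` itself from being the vertex farthest from `z`.
  have huz : G.Adj u z := (hu z).mpr rfl
  refine le_antisymm (Finset.sup_le fun v _ => ?_) ?_
  · have := huz.reachable.dist_triangle_left v
    have := dist_le_ecc G z v
    rw [dist_eq_one_iff_adj.mpr huz] at *
    omega
  · obtain ⟨v, -, hv⟩ := Finset.exists_mem_eq_sup univ ⟨u, mem_univ u⟩ fun v => G.dist z v
    change ecc G z = G.dist z v at hv
    have hzv : G.Reachable z v := Reachable.of_dist_ne_zero (by omega)
    obtain ⟨p, hp⟩ := (huz.reachable.trans hzv).exists_walk_length_eq_dist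
    cases p with
    | nil => rw [dist_comm, dist_eq_one_iff_adj.mpr huz] at hv; omega
    | @cons _ z' _ h q =>
      have hz' : z' = z := (hu z').mp h
      subst z'
      calc ecc G z + 1 ≤ q.length + 1 := by rw [hv]; exact Nat.succ_le_succ (dist_le q)
        _ = G.dist u v := by simpa using hp
        _ ≤ ecc G u := dist_le_ecc G u v

end Eccentricity

lemma Fintype.sum_ite_eq_const {ι R : Type*} [Fintype ι] [DecidableEq ι] [CommRing R]
    (a : ι) (x y : R) : ∑ i, (if i = a then x else y) = x + (Fintype.card ι - 1) * y := by
  calc ∑ i, (if i = a then x else y) = ∑ i, (y + if i = a then x - y else 0) :=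
        Finset.sum_congr rfl fun i _ => by split_ifs <;> ring
    _ = x + (Fintype.card ι - 1) * y := by
        rw [Finset.sum_add_distrib, Finset.sum_ite_eq' univ a, if_pos (mem_univ a),
          Finset.sum_const, Finset.card_univ, nsmul_eq_mul]
        ring

namespace KstPend2

variable {s t a b : ℕ} {xp : Fin s} {w : Fin s ⊕ Fin t}

local notation "X" i => (Sum.inl (Sum.inl i) : (Fin s ⊕ Fin t) ⊕ (Fin a ⊕ Fin b))
local notation "Y" j => (Sum.inl (Sum.inr j) : (Fin s ⊕ Fin t) ⊕ (Fin a ⊕ Fin b))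
local notation "P" p => (Sum.inr (Sum.inl p) : (Fin s ⊕ Fin t) ⊕ (Fin a ⊕ Fin b))
local notation "Q" q => (Sum.inr (Sum.inr q) : (Fin s ⊕ Fin t) ⊕ (Fin a ⊕ Fin b))

@[simp] lemma not_adj_xx (i j : Fin s) : ¬ (KstPend2 s t a b xp w).Adj (X i) (X j) := by
  simp [KstPend2]
@[simp] lemma adj_xy (i : Fin s) (j : Fin t) : (KstPend2 s t a b xp w).Adj (X i) (Y j) := by
  simp [KstPend2]
@[simp] lemma adj_yx (j : Fin t) (i : Fin s) : (KstPend2 s t a b xp w).Adj (Y j) (X i) :=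
  (adj_xy i j).symm
@[simp] lemma not_adj_yy (j k : Fin t) : ¬ (KstPend2 s t a b xp w).Adj (Y j) (Y k) := by
  simp [KstPend2]
@[simp] lemma adj_xp_iff (i : Fin s) (p : Fin a) :
    (KstPend2 s t a b xp w).Adj (X i) (P p) ↔ i = xp := by
  simp [KstPend2]
@[simp] lemma adj_px_iff (p : Fin a) (i : Fin s) :
    (KstPend2 s t a b xp w).Adj (P p) (X i) ↔ i = xp := by
  simp [KstPend2]
@[simp] lemma adj_xq_iff (i : Fin s) (q : Fin b) :
    (KstPend2 s t a b xp w).Adj (X i) (Q q) ↔ w = Sum.inl i := by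
  simp [KstPend2, eq_comm]
@[simp] lemma adj_qx_iff (q : Fin b) (i : Fin s) :
    (KstPend2 s t a b xp w).Adj (Q q) (X i) ↔ w = Sum.inl i := by
  simp [KstPend2, eq_comm]
@[simp] lemma not_adj_yp (j : Fin t) (p : Fin a) :
    ¬ (KstPend2 s t a b xp w).Adj (Y j) (P p) := by
  simp [KstPend2]
@[simp] lemma not_adj_py (p : Fin a) (j : Fin t) :
    ¬ (KstPend2 s t a b xp w).Adj (P p) (Y j) := by
  simp [KstPend2]
@[simp] lemma adj_yq_iff (j : Fin t) (q : Fin b) :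
    (KstPend2 s t a b xp w).Adj (Y j) (Q q) ↔ w = Sum.inr j := by
  simp [KstPend2, eq_comm]
@[simp] lemma adj_qy_iff (q : Fin b) (j : Fin t) :
    (KstPend2 s t a b xp w).Adj (Q q) (Y j) ↔ w = Sum.inr j := by
  simp [KstPend2, eq_comm]
@[simp] lemma not_adj_pp (p p' : Fin a) : ¬ (KstPend2 s t a b xp w).Adj (P p) (P p') := by
  simp [KstPend2]
@[simp] lemma not_adj_qq (q q' : Fin b) : ¬ (KstPend2 s t a b xp w).Adj (Q q) (Q q') := by
  simp [KstPend2]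
@[simp] lemma not_adj_pq (p : Fin a) (q : Fin b) :
    ¬ (KstPend2 s t a b xp w).Adj (P p) (Q q) := by
  simp [KstPend2]
@[simp] lemma not_adj_qp (q : Fin b) (p : Fin a) :
    ¬ (KstPend2 s t a b xp w).Adj (Q q) (P p) := by
  simp [KstPend2]

lemma degree_x (i : Fin s) : (KstPend2 s t a b xp w).degree (X i)
    = t + (if i = xp then a else 0) + (if w = Sum.inl i then b else 0) := by
  simp only [degree_eq_sum_ite, Fintype.sum_sum_type]
  simp [add_assoc]

lemma degree_y (j : Fin t) :
    (KstPend2 s t a b xp w).degree (Y j) = s + (if w = Sum.inr j then b else 0) := by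
  simp only [degree_eq_sum_ite, Fintype.sum_sum_type]
  simp

lemma degree_p (p : Fin a) : (KstPend2 s t a b xp w).degree (P p) = 1 := by
  simp only [degree_eq_sum_ite, Fintype.sum_sum_type]
  simp

lemma degree_q (q : Fin b) : (KstPend2 s t a b xp w).degree (Q q) = 1 := by
  simp only [degree_eq_sum_ite, Fintype.sum_sum_type]
  rcases w with x | y <;> simp

lemma ecc_x_self (hs : 2 ≤ s) (ht : 1 ≤ t) (hw : ∀ x, w = Sum.inl x → x = xp) :
    ecc (KstPend2 s t a b xp w) (X xp) = 2 := by
  obtain ⟨x, hx⟩ := Fintype.exists_ne_of_one_lt_card (by rwa [Fintype.card_fin]) xp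
  have y : Fin t := ⟨0, ht⟩
  refine ecc_eq_of_forall_dist_le ?_ (X x) ?_
  · rintro ((i | j) | (p | q))
    · exact dist_le_two_of_adj_of_adj (adj_xy xp y) (adj_yx y i)
    · exact (dist_le_one_of_adj (adj_xy xp j)).trans (by norm_num)
    · exact (dist_le_one_of_adj ((adj_xp_iff xp p).mpr rfl)).trans (by norm_num)
    · rcases w with x' | y'
      · exact (dist_le_one_of_adj ((adj_xq_iff xp q).mpr (by rw [hw x' rfl]))).trans
          (by norm_num)
      · exact dist_le_two_of_adj_of_adj (adj_xy xp y') ((adj_yq_iff y' q).mpr rfl)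
  · exact ((adj_xy xp y).reachable.trans (adj_yx y x).reachable).one_lt_dist_of_ne_of_not_adj
      (by simpa using hx.symm) (not_adj_xx xp x)

lemma ecc_x_of_ne (ht : 1 ≤ t) (ha : 1 ≤ a) {i : Fin s} (hi : i ≠ xp) :
    ecc (KstPend2 s t a b xp w) (X i) = 3 := by
  have y : Fin t := ⟨0, ht⟩
  have p : Fin a := ⟨0, ha⟩
  refine ecc_eq_of_forall_dist_le ?_ (P p) ?_
  · rintro ((i' | j) | (p' | q))
    · exact (dist_le_two_of_adj_of_adj (adj_xy i y) (adj_yx y i')).trans (by norm_num)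
    · exact (dist_le_one_of_adj (adj_xy i j)).trans (by norm_num)
    · exact dist_le_three_of_adj_of_adj_of_adj (adj_xy i y) (adj_yx y xp)
        ((adj_xp_iff xp p').mpr rfl)
    · rcases w with x | y'
      · exact dist_le_three_of_adj_of_adj_of_adj (adj_xy i y) (adj_yx y x)
          ((adj_xq_iff x q).mpr rfl)
      · exact (dist_le_two_of_adj_of_adj (adj_xy i y') ((adj_yq_iff y' q).mpr rfl)).trans
          (by norm_num)
  · refine ((adj_xy i y).reachable.trans ((adj_yx y xp).reachable.trans
      ((adj_xp_iff xp p).mpr rfl).reachable)).two_lt_dist (by simp) (by simpa using hi) ?_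
    rintro ((k | j) | (p' | q)) h₁ h₂ <;> simp_all

lemma ecc_y_of_forall_eq_inr (ha : 1 ≤ a) {j : Fin t} (hj : ∀ k, w = Sum.inr k → k = j) :
    ecc (KstPend2 s t a b xp w) (Y j) = 2 := by
  have p : Fin a := ⟨0, ha⟩
  refine ecc_eq_of_forall_dist_le ?_ (P p) ?_
  · rintro ((i | k) | (p' | q))
    · exact (dist_le_one_of_adj (adj_yx j i)).trans (by norm_num)
    · exact dist_le_two_of_adj_of_adj (adj_yx j xp) (adj_xy xp k)
    · exact dist_le_two_of_adj_of_adj (adj_yx j xp) ((adj_xp_iff xp p').mpr rfl)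
    · rcases w with x | k
      · exact dist_le_two_of_adj_of_adj (adj_yx j x) ((adj_xq_iff x q).mpr rfl)
      · exact (dist_le_one_of_adj ((adj_yq_iff j q).mpr (by rw [hj k rfl]))).trans
          (by norm_num)
  · exact ((adj_yx j xp).reachable.trans ((adj_xp_iff xp p).mpr rfl).reachable
      ).one_lt_dist_of_ne_of_not_adj (by simp) (not_adj_yp j p)

lemma ecc_y_eq_three_of_ne {yq : Fin t} (hb : 1 ≤ b) {j : Fin t} (hj : j ≠ yq) :
    ecc (KstPend2 s t a b xp (Sum.inr yq)) (Y j) = 3 := by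
  have q : Fin b := ⟨0, hb⟩
  refine ecc_eq_of_forall_dist_le ?_ (Q q) ?_
  · rintro ((i | k) | (p | q'))
    · exact (dist_le_one_of_adj (adj_yx j i)).trans (by norm_num)
    · exact (dist_le_two_of_adj_of_adj (adj_yx j xp) (adj_xy xp k)).trans (by norm_num)
    · exact (dist_le_two_of_adj_of_adj (adj_yx j xp) ((adj_xp_iff xp p).mpr rfl)).trans
        (by norm_num)
    · exact dist_le_three_of_adj_of_adj_of_adj (adj_yx j xp) (adj_xy xp yq)
        ((adj_yq_iff yq q').mpr rfl)
  · refine ((adj_yx j xp).reachable.trans ((adj_xy xp yq).reachable.trans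
      ((adj_yq_iff yq q).mpr rfl).reachable)).two_lt_dist (by simp) (by simpa using hj.symm) ?_
    rintro ((k | k) | (p | q')) h₁ h₂ <;> simp_all

lemma ecc_w (hs : 2 ≤ s) (ht : 1 ≤ t) (ha : 1 ≤ a) (hw : ∀ x, w = Sum.inl x → x = xp) :
    ecc (KstPend2 s t a b xp w) (Sum.inl w) = 2 := by
  rcases w with x | y
  · obtain rfl := hw x rfl
    exact ecc_x_self hs ht hw
  · exact ecc_y_of_forall_eq_inr ha fun k hk => (Sum.inr_injective hk).symm

lemma ecc_p (hs : 2 ≤ s) (ht : 1 ≤ t) (hw : ∀ x, w = Sum.inl x → x = xp) (p : Fin a) :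
    ecc (KstPend2 s t a b xp w) (P p) = 3 := by
  rw [ecc_of_forall_adj_iff (z := X xp) ?_ (ecc_x_self hs ht hw).ge, ecc_x_self hs ht hw]
  rintro ((i | j) | (p' | q)) <;> simp [eq_comm]

lemma ecc_q (hs : 2 ≤ s) (ht : 1 ≤ t) (ha : 1 ≤ a) (hw : ∀ x, w = Sum.inl x → x = xp)
    (q : Fin b) : ecc (KstPend2 s t a b xp w) (Q q) = 3 := by
  rw [ecc_of_forall_adj_iff (z := Sum.inl w) ?_ (ecc_w hs ht ha hw).ge,
    ecc_w hs ht ha hw]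
  rintro ((i | j) | (p | q')) <;> simp [eq_comm]

lemma cei_eq_sum_x_add_sum_y (hs : 2 ≤ s) (ht : 1 ≤ t) (ha : 1 ≤ a)
    (hw : ∀ x, w = Sum.inl x → x = xp) :
    cei (KstPend2 s t a b xp w) =
      ∑ i, ((KstPend2 s t a b xp w).degree (X i) : ℚ) / ecc (KstPend2 s t a b xp w) (X i) +
      ∑ j, ((KstPend2 s t a b xp w).degree (Y j) : ℚ) / ecc (KstPend2 s t a b xp w) (Y j) +
      (a + b) / 3 := by
  simp only [cei, Fintype.sum_sum_type, degree_p, degree_q, ecc_p hs ht hw, ecc_q hs ht ha hw]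
  simp only [Nat.cast_one, Nat.cast_ofNat, sum_const, card_univ, Fintype.card_fin, nsmul_eq_mul]
  ring

lemma sum_degree_div_ecc_x (hs : 2 ≤ s) (ht : 1 ≤ t) (ha : 1 ≤ a)
    (hw : ∀ x, w = Sum.inl x → x = xp) :
    ∑ i, ((KstPend2 s t a b xp w).degree (X i) : ℚ) / ecc (KstPend2 s t a b xp w) (X i) =
      (t + a + if w = Sum.inl xp then (b : ℚ) else 0) / 2 + (s - 1) * (t / 3) := by
  have h : ∀ i,
      ((KstPend2 s t a b xp w).degree (X i) : ℚ) / ecc (KstPend2 s t a b xp w) (X i) =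
        if i = xp then (t + a + if w = Sum.inl xp then (b : ℚ) else 0) / 2 else t / 3 := by
    intro i
    by_cases hi : i = xp
    · subst hi
      rw [if_pos rfl, degree_x, if_pos rfl, ecc_x_self hs ht hw]
      push_cast
      ring
    · have hwi : w ≠ Sum.inl i := fun h => hi (hw i h)
      rw [if_neg hi, degree_x, ecc_x_of_ne ht ha hi]
      simp [hi, hwi]
  simp only [h, Fintype.sum_ite_eq_const, Fintype.card_fin]

lemma sum_degree_div_ecc_y_of_inl (ha : 1 ≤ a) (x : Fin s) :
    ∑ j, ((KstPend2 s t a b xp (Sum.inl x)).degree (Y j) : ℚ) /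
      ecc (KstPend2 s t a b xp (Sum.inl x)) (Y j) = t * (s / 2) := by
  have h : ∀ j, ((KstPend2 s t a b xp (Sum.inl x)).degree (Y j) : ℚ) /
      ecc (KstPend2 s t a b xp (Sum.inl x)) (Y j) = s / 2 := fun j => by
    rw [degree_y, ecc_y_of_forall_eq_inr ha (by simp)]
    simp
  simp [h]

lemma sum_degree_div_ecc_y_of_inr (ha : 1 ≤ a) (hb : 1 ≤ b) (yq : Fin t) :
    ∑ j, ((KstPend2 s t a b xp (Sum.inr yq)).degree (Y j) : ℚ) /
      ecc (KstPend2 s t a b xp (Sum.inr yq)) (Y j) = (s + b) / 2 + (t - 1) * (s / 3) := by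
  have h : ∀ j, ((KstPend2 s t a b xp (Sum.inr yq)).degree (Y j) : ℚ) /
      ecc (KstPend2 s t a b xp (Sum.inr yq)) (Y j) =
        if j = yq then ((s : ℚ) + b) / 2 else (s : ℚ) / 3 := by
    intro j
    by_cases hj : j = yq
    · subst hj
      rw [if_pos rfl, degree_y,
        ecc_y_of_forall_eq_inr ha fun k hk => (Sum.inr_injective hk).symm]
      simp
    · rw [if_neg hj, degree_y, ecc_y_eq_three_of_ne hb hj]
      simp [Ne.symm hj]
  simp only [h, Fintype.sum_ite_eq_const, Fintype.card_fin]

end KstPend2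

/-- Moving the `b` pendant edges from `y_q` (in the part of size `t`) to `x_p`
(in the part of size `s`, `2 ≤ s ≤ t`) increases the connective eccentricity index
by exactly `s(t-1)/6 > 0`. -/
theorem cei_move_pendants_across (s t a b : ℕ) (hs : 2 ≤ s) (hst : s ≤ t)
    (ha : 1 ≤ a) (hb : 1 ≤ b) (xp : Fin s) (yq : Fin t) :
    cei (KstPend2 s t a b xp (Sum.inl xp)) - cei (KstPend2 s t a b xp (Sum.inr yq))
        = (s : ℚ) * ((t : ℚ) - 1) / 6 ∧
      (0 : ℚ) < (s : ℚ) * ((t : ℚ) - 1) / 6 := by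
  have ht : 1 ≤ t := by omega
  have hw_inl : ∀ x, (Sum.inl xp : Fin s ⊕ Fin t) = Sum.inl x → x = xp :=
    fun x h => (Sum.inl_injective h).symm
  have hw_inr : ∀ x, (Sum.inr yq : Fin s ⊕ Fin t) = Sum.inl x → x = xp := by simp
  have hs' : (0 : ℚ) < s := by exact_mod_cast (by omega : 0 < s)
  have ht' : (0 : ℚ) < t - 1 := sub_pos.mpr (by exact_mod_cast (by omega : 1 < t))
  refine ⟨?_, div_pos (mul_pos hs' ht') (by norm_num)⟩
  rw [KstPend2.cei_eq_sum_x_add_sum_y hs ht ha hw_inl,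
    KstPend2.cei_eq_sum_x_add_sum_y hs ht ha hw_inr, KstPend2.sum_degree_div_ecc_x hs ht ha hw_inl,
    KstPend2.sum_degree_div_ecc_x hs ht ha hw_inr, KstPend2.sum_degree_div_ecc_y_of_inl ha xp,
    KstPend2.sum_degree_div_ecc_y_of_inr ha hb yq, if_pos rfl, if_neg Sum.inr_ne_inl]
  ring
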